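/- For every odd integer k ≥ 21, there exists an ascending partition P of n = 3k − 1 of size k such that slack_j(P) ≥ 0 for all 1 ≤ j ≤ k − 1 and P is not equitable. -/

import Mathlib

/-- `s^{n,k} = n(n+1)/(2k)`. -/
def sNK (n k : ℕ) : ℕ := n * (n + 1) / (2 * k)

/-- `slack_j(P) = Σ_{i=1}^{p_1+⋯+p_j} (n − i + 1) − j·s^{n,k}`. -/
def slack (n k : ℕ) (p : ℕ → ℕ) (j : ℕ) : ℤ :=
  (∑ i ∈ Finset.Icc 1 (∑ t ∈ Finset.Icc 1 j, p t), ((n : ℤ) - (i : ℤ) + 1))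
    - (j : ℤ) * (sNK n k : ℤ)

/-- `p` (on indices `1,…,k`) is an ascending partition of `n` of size `k`. -/
def IsAscPartition (n k : ℕ) (p : ℕ → ℕ) : Prop :=
  (∀ i, 1 ≤ i → i ≤ k → 1 ≤ p i) ∧
  (∀ i j, 1 ≤ i → i ≤ j → j ≤ k → p i ≤ p j) ∧
  ∑ i ∈ Finset.Icc 1 k, p i = n

/-- `p` is equitable: `{1,…,n}` partitions into sets `A_1,…,A_k` with `|A_i| = p_i`
and each element sum equal to `s^{n,k}`. -/
def Equitable (n k : ℕ) (p : ℕ → ℕ) : Prop :=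
  ∃ A : ℕ → Finset ℕ,
    (∀ i j, 1 ≤ i → i < j → j ≤ k → Disjoint (A i) (A j)) ∧
    (Finset.Icc 1 k).biUnion A = Finset.Icc 1 n ∧
    (∀ i, 1 ≤ i → i ≤ k → (A i).card = p i) ∧
    (∀ i, 1 ≤ i → i ≤ k → ∑ x ∈ A i, x = sNK n k)

/-!
Write `k = 2m + 1`, so that `n = 6m + 2` and `s^{n,k} = 9m + 3`. The partition `witness m a`,
with `a = ⌊(3m + 1)/2⌋`, has `a` parts `2`, then `3m + 3 - 2a` parts `3`, then parts `6` up to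
index `2m`, and a last part `3m + 11 - 2a`.

It is not equitable: a set of size 2 and sum `9m + 3` inside `{1, …, 6m + 2}` lies in
`{3m + 1, …, 6m + 2}`, and a set of size 3 with that sum meets it, so the `a` pairs and
`3m + 3 - 2a` triples would need `3m + 3` elements of a set of size `3m + 2`.

Its slacks are nonnegative: with `M` the prefix sum, `2 slack_j = M (2n + 1 - M) - 2 j s^{n,k}`.
On a run of equal parts `M` is affine in `j`, so the slack is a concave quadratic in `j` there,
and it suffices to check it at the ends `j = 0, a, 3m + 3 - a, 2m` of the runs; at
`j = 3m + 3 - a` this needs `m ≥ 10`, i.e. `k ≥ 21`.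
-/

open Finset

theorem two_mul_sum_Icc_sub_add_one (n M : ℕ) :
    2 * ∑ i ∈ Icc 1 M, ((n : ℤ) - i + 1) = M * (2 * n + 1 - M) := by
  induction M with
  | zero => simp
  | succ M ih =>
    rw [sum_Icc_succ_top (by omega), mul_add, ih]
    push_cast
    ring

theorem two_mul_slack (n k : ℕ) (p : ℕ → ℕ) (j : ℕ) :
    2 * slack n k p j = (∑ t ∈ Icc 1 j, p t : ℕ) * (2 * n + 1 - (∑ t ∈ Icc 1 j, p t : ℕ))
      - 2 * j * sNK n k := by
  rw [slack, mul_sub, two_mul_sum_Icc_sub_add_one]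
  ring

theorem sum_Icc_one_eq_add_of_const_on_Ioc {p : ℕ → ℕ} {lo hi c : ℕ} (hle : lo ≤ hi)
    (hc : ∀ t, lo < t → t ≤ hi → p t = c) :
    ∑ t ∈ Icc 1 hi, p t = ∑ t ∈ Icc 1 lo, p t + c * (hi - lo) := by
  induction hi, hle using Nat.le_induction with
  | base => simp
  | succ hi hle ih =>
    rw [sum_Icc_succ_top (by omega), ih fun t h₁ h₂ => hc t h₁ (by omega), hc _ (by omega) le_rfl,
      Nat.sub_add_comm hle]
    ring

theorem affine_mul_sub_nonneg_of_endpoints {R : Type*} [CommRing R] [LinearOrder R]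
    [IsStrictOrderedRing R] (α β N S : R) {lo hi x : R}
    (hlo : 0 ≤ (α * lo + β) * (N - (α * lo + β)) - S * lo)
    (hhi : 0 ≤ (α * hi + β) * (N - (α * hi + β)) - S * hi) (h₁ : lo ≤ x) (h₂ : x ≤ hi) :
    0 ≤ (α * x + β) * (N - (α * x + β)) - S * x := by
  rcases h₁.eq_or_lt with rfl | hlt
  · exact hlo
  -- a quadratic with leading coefficient `-α²` lies above its chord
  have interp : (hi - lo) * ((α * x + β) * (N - (α * x + β)) - S * x) =
      (hi - x) * ((α * lo + β) * (N - (α * lo + β)) - S * lo)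
        + (x - lo) * ((α * hi + β) * (N - (α * hi + β)) - S * hi)
        + α ^ 2 * (hi - lo) * ((x - lo) * (hi - x)) := by ring
  have hpos : 0 < hi - lo := by linarith
  refine nonneg_of_mul_nonneg_right (interp ▸ ?_) hpos
  have := mul_nonneg (sub_nonneg.2 h₂) hlo
  have := mul_nonneg (sub_nonneg.2 h₁) hhi
  have := mul_nonneg (mul_nonneg (sq_nonneg α) hpos.le)
    (mul_nonneg (sub_nonneg.2 h₁) (sub_nonneg.2 h₂))
  linarith

theorem slack_nonneg_of_const_on_Ioc {n k : ℕ} {p : ℕ → ℕ} {lo hi c : ℕ}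
    (hc : ∀ t, lo < t → t ≤ hi → p t = c)
    (hlo : 0 ≤ slack n k p lo) (hhi : 0 ≤ slack n k p hi) {j : ℕ} (h₁ : lo ≤ j) (h₂ : j ≤ hi) :
    0 ≤ slack n k p j := by
  set β : ℤ := (∑ t ∈ Icc 1 lo, p t : ℕ) - c * lo with hβ
  have affine : ∀ x, lo ≤ x → x ≤ hi →
      2 * slack n k p x = (c * x + β) * ((2 * n + 1) - (c * x + β)) - (2 * sNK n k) * x := by
    intro x hx₁ hx₂
    rw [two_mul_slack, sum_Icc_one_eq_add_of_const_on_Ioc hx₁ fun t h h' => hc t h (h'.trans hx₂),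
      hβ]
    push_cast [Nat.cast_sub hx₁]
    ring
  have := affine_mul_sub_nonneg_of_endpoints (c : ℤ) β (2 * n + 1) (2 * sNK n k)
    (by linarith [affine lo le_rfl (h₁.trans h₂)]) (by linarith [affine hi (h₁.trans h₂) le_rfl])
    (Nat.cast_le.2 h₁) (Nat.cast_le.2 h₂)
  linarith [affine j h₁ h₂]

theorem sNK_six_mul_add_two (m : ℕ) : sNK (6 * m + 2) (2 * m + 1) = 9 * m + 3 := by
  rw [sNK, show (6 * m + 2) * (6 * m + 2 + 1) = 2 * (2 * m + 1) * (9 * m + 3) by ring,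
    Nat.mul_div_cancel_left _ (by omega)]

theorem sum_card_filter_eq_of_partition {n k : ℕ} {A : ℕ → Finset ℕ}
    (hdisj : ∀ i j, 1 ≤ i → i < j → j ≤ k → Disjoint (A i) (A j))
    (hcover : (Icc 1 k).biUnion A = Icc 1 n) (P : ℕ → Prop) [DecidablePred P] :
    ∑ i ∈ Icc 1 k, #{x ∈ A i | P x} = #{x ∈ Icc 1 n | P x} := by
  rw [← hcover, filter_biUnion, card_biUnion]
  intro i hi j hj hij
  simp only [coe_Icc, Set.mem_Icc] at hi hj
  refine Disjoint.mono (filter_subset _ _) (filter_subset _ _) ?_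
  rcases hij.lt_or_gt with h | h
  · exact hdisj i j hi.1 h hj.2
  · exact (hdisj j i hj.1 h hi.2).symm

theorem sum_le_mul_card_add_mul_card_filter_lt {A : Finset ℕ} {n t : ℕ} (hA : ∀ x ∈ A, x ≤ n) :
    ∑ x ∈ A, x ≤ t * #A + (n - t) * #{x ∈ A | t < x} := by
  rw [card_filter, mul_sum, card_eq_sum_ones, mul_sum, ← sum_add_distrib]
  refine sum_le_sum fun x hx => ?_
  have := hA x hx
  split_ifs <;> omega

def witness (m a j : ℕ) : ℕ :=
  if j ≤ a then 2 else if j ≤ 3 * m + 3 - a then 3 else if j ≤ 2 * m then 6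
  else 3 * m + 11 - 2 * a

section witness

variable {m a : ℕ}

theorem witness_of_le {j : ℕ} (h : j ≤ a) : witness m a j = 2 := if_pos h

theorem witness_eq_three {j : ℕ} (h : a < j) (h' : j ≤ 3 * m + 3 - a) : witness m a j = 3 := by
  simp [witness, h.not_ge, h']

theorem witness_eq_six (h₂ : 2 * a ≤ 3 * m + 1) {j : ℕ} (h : 3 * m + 3 - a < j) (h' : j ≤ 2 * m) :
    witness m a j = 6 := by
  simp only [witness]
  split_ifs <;> omega

theorem sum_Icc_witness_twos : ∑ t ∈ Icc 1 a, witness m a t = 2 * a := by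
  rw [sum_Icc_one_eq_add_of_const_on_Ioc (Nat.zero_le a) fun _ _ => witness_of_le,
    Icc_eq_empty_of_lt zero_lt_one, sum_empty]
  omega

theorem sum_Icc_witness_threes (h₂ : 2 * a ≤ 3 * m + 1) :
    ∑ t ∈ Icc 1 (3 * m + 3 - a), witness m a t = 9 * m + 9 - 4 * a := by
  rw [sum_Icc_one_eq_add_of_const_on_Ioc (by omega) fun _ => witness_eq_three,
    sum_Icc_witness_twos]
  omega

theorem sum_Icc_witness_sixes (h₁ : 3 * m ≤ 2 * a) (h₂ : 2 * a ≤ 3 * m + 1) (hm : 6 ≤ m) :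
    ∑ t ∈ Icc 1 (2 * m), witness m a t = 3 * m + 2 * a - 9 := by
  rw [sum_Icc_one_eq_add_of_const_on_Ioc (by omega) fun _ => witness_eq_six h₂,
    sum_Icc_witness_threes h₂]
  omega

theorem sum_Icc_witness (h₁ : 3 * m ≤ 2 * a) (h₂ : 2 * a ≤ 3 * m + 1) (hm : 6 ≤ m) :
    ∑ t ∈ Icc 1 (2 * m + 1), witness m a t = 6 * m + 2 := by
  rw [sum_Icc_succ_top (by omega), sum_Icc_witness_sixes h₁ h₂ hm, witness]
  split_ifs <;> omega

theorem isAscPartition_witness (h₁ : 3 * m ≤ 2 * a) (h₂ : 2 * a ≤ 3 * m + 1) (hm : 6 ≤ m) :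
    IsAscPartition (6 * m + 2) (2 * m + 1) (witness m a) := by
  refine ⟨fun i _ _ => ?_, fun i j _ hij _ => ?_, sum_Icc_witness h₁ h₂ hm⟩ <;>
  · simp only [witness]
    split_ifs <;> omega

theorem sum_Icc_four_sub_witness (h₁ : 3 * m ≤ 2 * a) (h₂ : 2 * a ≤ 3 * m + 1) (hm : 6 ≤ m) :
    ∑ t ∈ Icc 1 (2 * m + 1), (4 - witness m a t) = 3 * m + 3 := by
  rw [sum_Icc_one_eq_add_of_const_on_Ioc (lo := 3 * m + 3 - a) (c := 0) (by omega)
      fun t _ _ => by simp only [witness]; split_ifs <;> omega,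
    sum_Icc_one_eq_add_of_const_on_Ioc (lo := a) (c := 1) (by omega)
      fun t h h' => by rw [witness_eq_three h h'],
    sum_Icc_one_eq_add_of_const_on_Ioc (Nat.zero_le a) fun t _ h => by rw [witness_of_le h],
    Icc_eq_empty_of_lt zero_lt_one, sum_empty]
  omega

theorem not_equitable_witness (h₁ : 3 * m ≤ 2 * a) (h₂ : 2 * a ≤ 3 * m + 1)
    (hm : 6 ≤ m) : ¬ Equitable (6 * m + 2) (2 * m + 1) (witness m a) := by
  rintro ⟨A, hdisj, hcover, hcard, hsum⟩
  rw [sNK_six_mul_add_two] at hsum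
  have total : ∑ i ∈ Icc 1 (2 * m + 1), #{x ∈ A i | 3 * m < x} = 3 * m + 2 := by
    rw [sum_card_filter_eq_of_partition hdisj hcover]
    have : {x ∈ Icc 1 (6 * m + 2) | 3 * m < x} = Icc (3 * m + 1) (6 * m + 2) := by
      ext x
      simp only [mem_filter, mem_Icc]
      omega
    rw [this, Nat.card_Icc]
    omega
  -- `4 - p` is the number of elements above `3m` forced in a part of size `p` and sum `9m + 3`
  have large (i : ℕ) (hi : i ∈ Icc 1 (2 * m + 1)) : 4 - witness m a i ≤ #{x ∈ A i | 3 * m < x} := by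
    rw [mem_Icc] at hi
    have hA : ∀ x ∈ A i, x ≤ 6 * m + 2 := fun x hx =>
      (mem_Icc.1 (hcover ▸ mem_biUnion.2 ⟨i, mem_Icc.2 hi, hx⟩)).2
    have hle := sum_le_mul_card_add_mul_card_filter_lt (t := 3 * m) hA
    have hsub := card_filter_le (A i) (3 * m < ·)
    rw [hsum i hi.1 hi.2, hcard i hi.1 hi.2, show 6 * m + 2 - 3 * m = 3 * m + 2 by omega] at hle
    rw [hcard i hi.1 hi.2] at hsub
    by_contra! h
    have hsmall : #{x ∈ A i | 3 * m < x} + witness m a i ≤ 3 := by omega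
    have hc : #{x ∈ A i | 3 * m < x} ≤ 1 := by omega
    nlinarith [Nat.mul_le_mul_left (3 * m) hsmall]
  have := sum_le_sum large
  rw [sum_Icc_four_sub_witness h₁ h₂ hm, total] at this
  omega

theorem slack_witness_nonneg (h₁ : 3 * m ≤ 2 * a) (h₂ : 2 * a ≤ 3 * m + 1)
    (hm : 10 ≤ m) {j : ℕ} (hj : j ≤ 2 * m) :
    0 ≤ slack (6 * m + 2) (2 * m + 1) (witness m a) j := by
  have two_mul_slack_eq (j : ℕ) := two_mul_slack (6 * m + 2) (2 * m + 1) (witness m a) j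
  rw [sNK_six_mul_add_two] at two_mul_slack_eq
  have at_zero : slack (6 * m + 2) (2 * m + 1) (witness m a) 0 = 0 := by simp [slack]
  have at_twos : 0 ≤ slack (6 * m + 2) (2 * m + 1) (witness m a) a := by
    have := two_mul_slack_eq a
    rw [sum_Icc_witness_twos] at this
    push_cast at this
    nlinarith
  have at_threes : 0 ≤ slack (6 * m + 2) (2 * m + 1) (witness m a) (3 * m + 3 - a) := by
    have := two_mul_slack_eq (3 * m + 3 - a)
    rw [sum_Icc_witness_threes h₂] at this
    push_cast [show 4 * a ≤ 9 * m + 9 by omega, show a ≤ 3 * m + 3 by omega] at this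
    rcases (by omega : (2 * a : ℤ) = 3 * m ∨ (2 * a : ℤ) = 3 * m + 1) with h | h <;> nlinarith
  have at_sixes : 0 ≤ slack (6 * m + 2) (2 * m + 1) (witness m a) (2 * m) := by
    have := two_mul_slack_eq (2 * m)
    rw [sum_Icc_witness_sixes h₁ h₂ (by omega)] at this
    push_cast [show 9 ≤ 3 * m + 2 * a by omega] at this
    rcases (by omega : (2 * a : ℤ) = 3 * m ∨ (2 * a : ℤ) = 3 * m + 1) with h | h <;> nlinarith
  rcases le_total j a with hja | haj
  · exact slack_nonneg_of_const_on_Ioc (fun _ _ => witness_of_le) at_zero.ge at_twos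
      (Nat.zero_le j) hja
  rcases le_total j (3 * m + 3 - a) with hjb | hbj
  · exact slack_nonneg_of_const_on_Ioc (fun _ => witness_eq_three) at_twos at_threes haj hjb
  · exact slack_nonneg_of_const_on_Ioc (fun _ => witness_eq_six h₂) at_threes at_sixes hbj hj

end witness

theorem statement16 (k : ℕ) (hk : Odd k) (hk21 : 21 ≤ k) :
    ∃ p : ℕ → ℕ,
      IsAscPartition (3 * k - 1) k p ∧
      (∀ j, 1 ≤ j → j ≤ k - 1 → 0 ≤ slack (3 * k - 1) k p j) ∧
      ¬ Equitable (3 * k - 1) k p := by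
  obtain ⟨m, rfl⟩ := hk
  have hm : 10 ≤ m := by omega
  have h₁ : 3 * m ≤ 2 * ((3 * m + 1) / 2) := by omega
  have h₂ : 2 * ((3 * m + 1) / 2) ≤ 3 * m + 1 := by omega
  rw [show 3 * (2 * m + 1) - 1 = 6 * m + 2 by omega]
  exact ⟨witness m ((3 * m + 1) / 2), isAscPartition_witness h₁ h₂ (by omega),
    fun j _ hj => slack_witness_nonneg h₁ h₂ hm (by omega),
    not_equitable_witness h₁ h₂ (by omega)⟩
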